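/- arXiv:2310.12239 — 3 statements merged into one kernel-verified Lean document; each statement's English description precedes it below -/
import Mathlib

section
/- Let G be a connected unweighted undirected graph, V' ⊆ V, and G' the induced subgraph of G on V'. For any vertex v ∈ V' (with G' connected containing v) and any integer 1 ≤ s < |V'|, it holds that ecc_G(v,s) ≤ ecc_{G'}(v,s), where ecc_H(v,s) is the largest integer k such that every vertex at distance at most k (and > 0) from v in H lies among the s closest vertices to v in H. -/
open SimpleGraph

/-- `ballT G v r` = T(v,r): vertices other than `v` at distance at most `r` from `v`. -/
def ballT {V : Type*} (G : SimpleGraph V) (v : V) (r : ℕ) : Set V :=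
  {u | u ≠ v ∧ G.dist v u ≤ r}

/-- `closestSet G v s N` says that `N` is a set of the `s` closest vertices to `v`
(the first `s` vertices met in a BFS from `v`, with a consistent tie-breaking):
`v ∉ N`, `|N| = s`, and every member of `N` is at least as close to `v` as every
non-member (other than `v`). -/
def closestSet {V : Type*} (G : SimpleGraph V) (v : V) (s : ℕ) (N : Set V) : Prop :=
  v ∉ N ∧ N.ncard = s ∧ ∀ w ∈ N, ∀ u, u ∉ N → u ≠ v → G.dist v w ≤ G.dist v u

/-- `eccTrunc G v N` = ecc(v,s) for `N = N(v,s)`: the largest `k ∈ [0, ecc(v)]` with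
`T(v,k) ⊆ N`. -/
noncomputable def eccTrunc {V : Type*} [Fintype V] (G : SimpleGraph V) (v : V)
    (N : Set V) : ℕ :=
  sSup {k : ℕ | k ≤ (⨆ u, G.dist v u) ∧ ballT G v k ⊆ N}

/-- In a connected graph, every value up to a distance is attained as a distance. -/
lemma exists_dist_eq_aux {V : Type*} {G : SimpleGraph V} (hG : G.Connected) (v : V) :
    ∀ d : ℕ, ∀ w : V, G.dist v w = d → ∀ k, k ≤ d → ∃ u, G.dist v u = k := by
  intro d
  induction d using Nat.strong_induction_on with
  | _ d ih =>
    intro w hw k hk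
    rcases eq_or_lt_of_le hk with h | h
    · exact ⟨w, by omega⟩
    · have hd : G.dist v w ≠ 0 := by omega
      obtain ⟨p, hp⟩ := SimpleGraph.exists_walk_of_dist_ne_zero hd
      set q := p.reverse with hq
      have hqlen : q.length = d := by
        rw [hq, SimpleGraph.Walk.length_reverse]; omega
      have hqnil : ¬ q.Nil := by
        rw [SimpleGraph.Walk.nil_iff_length_eq, hqlen]; omega
      have hadj : G.Adj w (q.getVert 1) := q.adj_snd hqnil
      have hle : G.dist v (q.getVert 1) ≤ d - 1 := by
        have h1 := SimpleGraph.dist_le (q.tail.reverse)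
        rw [SimpleGraph.Walk.length_reverse] at h1
        have h2 := SimpleGraph.Walk.length_tail_add_one hqnil
        have h3 : G.dist v (q.getVert 1) ≤ q.tail.length := h1
        omega
      have hge : d - 1 ≤ G.dist v (q.getVert 1) := by
        have h1 := hG.dist_triangle (u := v) (v := q.getVert 1) (w := w)
        have h2 : G.dist (q.getVert 1) w = 1 :=
          SimpleGraph.dist_eq_one_iff_adj.mpr hadj.symm
        omega
      exact ih (d - 1) (by omega) (q.getVert 1) (le_antisymm hle hge) k (by omega)

/-- truncated eccentricity does not decrease when passing to an induced
subgraph. -/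
theorem stmt3 {V : Type*} [Fintype V] (G : SimpleGraph V) (hG : G.Connected)
    (V' : Set V) [Fintype ↥V'] (v : V) (hv : v ∈ V')
    (hG' : (G.induce V').Connected)
    (s : ℕ) (hs1 : 1 ≤ s) (hs2 : s < V'.ncard)
    (N : Set V) (hN : closestSet G v s N)
    (N' : Set ↥V') (hN' : closestSet (G.induce V') ⟨v, hv⟩ s N') :
    eccTrunc G v N ≤ eccTrunc (G.induce V') ⟨v, hv⟩ N' := by
  classical
  set G' := G.induce V' with hG'def
  set v' : ↥V' := ⟨v, hv⟩ with hv'def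
  -- distances in the induced subgraph dominate distances in G
  have hdd : ∀ u : ↥V', G.dist v ↑u ≤ G'.dist v' u := by
    intro u
    obtain ⟨p, hp⟩ := (hG' v' u).exists_walk_length_eq_dist
    calc G.dist v ↑u ≤ (p.map (SimpleGraph.Embedding.induce V').toHom).length :=
          SimpleGraph.dist_le _
      _ = p.length := SimpleGraph.Walk.length_map _ _
      _ = G'.dist v' u := hp
  set S : Set ℕ := {k : ℕ | k ≤ (⨆ u, G.dist v u) ∧ ballT G v k ⊆ N} with hS
  set S' : Set ℕ := {k : ℕ | k ≤ (⨆ u, G'.dist v' u) ∧ ballT G' v' k ⊆ N'} with hS'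
  have hS0 : (0 : ℕ) ∈ S := by
    constructor
    · exact Nat.zero_le _
    · intro u hu
      exact absurd ((hG.dist_eq_zero_iff).mp (Nat.le_zero.mp hu.2)).symm hu.1
  have hSbdd : BddAbove S := ⟨⨆ u, G.dist v u, fun k hk => hk.1⟩
  have hKmem : sSup S ∈ S := Nat.sSup_mem ⟨0, hS0⟩ hSbdd
  set K := sSup S with hK
  obtain ⟨hK1, hK2⟩ := hKmem
  -- Part 1 : ballT G' v' K ⊆ N'
  have part1 : ballT G' v' K ⊆ N' := by
    intro u hu
    obtain ⟨hune, hud⟩ := hu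
    have huv : (↑u : V) ≠ v := fun h => hune (Subtype.ext h)
    have huN : (↑u : V) ∈ N := hK2 ⟨huv, le_trans (hdd u) hud⟩
    by_contra huN'
    -- every member of N' is within distance K in G', hence in N
    have hsub : insert (↑u : V) (Subtype.val '' N') ⊆ N := by
      intro x hx
      rcases hx with rfl | ⟨w, hwN', rfl⟩
      · exact huN
      · have hwv' : w ≠ v' := fun h => hN'.1 (h ▸ hwN')
        have hwd : G'.dist v' w ≤ K :=
          le_trans (hN'.2.2 w hwN' u huN' hune) hud
        exact hK2 ⟨fun h => hwv' (Subtype.ext h), le_trans (hdd w) hwd⟩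
    have hcard1 : (Subtype.val '' N').ncard = s := by
      rw [Set.ncard_image_of_injective _ Subtype.val_injective, hN'.2.1]
    have hnotmem : (↑u : V) ∉ Subtype.val '' N' := by
      rintro ⟨w, hwN', hw⟩
      exact huN' ((Subtype.val_injective hw) ▸ hwN')
    have hcard2 : (insert (↑u : V) (Subtype.val '' N')).ncard = s + 1 := by
      rw [Set.ncard_insert_of_notMem hnotmem, hcard1]
    have := Set.ncard_le_ncard hsub (Set.toFinite N)
    rw [hcard2, hN.2.1] at this
    omega
  -- Part 2 : K ≤ ⨆ u, G'.dist v' u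
  have part2 : K ≤ ⨆ u, G'.dist v' u := by
    by_contra hcon
    push_neg at hcon
    set e' := ⨆ u, G'.dist v' u with he'
    -- every vertex of V' other than v is in N
    have hVN : ∀ u : ↥V', u ≠ v' → (↑u : V) ∈ N := by
      intro u hu
      have h1 : G'.dist v' u ≤ e' :=
        le_ciSup (Set.Finite.bddAbove (Set.finite_range _)) u
      exact hK2 ⟨fun h => hu (Subtype.ext h), by
        have := hdd u; omega⟩
    -- so the image of V' \ {v} is a subset of N
    have hsub : Subtype.val '' ({u : ↥V' | u ≠ v'}) ⊆ N := by
      rintro x ⟨w, hw, rfl⟩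
      exact hVN w hw
    -- a vertex at distance exactly K from v in G
    have hKpos : 1 ≤ K := by omega
    have : Nonempty V := ⟨v⟩
    obtain ⟨w, hw⟩ := Finite.exists_max (G.dist v)
    have hKw : K ≤ G.dist v w := le_trans hK1 (ciSup_le hw)
    obtain ⟨u, hu⟩ := exists_dist_eq_aux hG v (G.dist v w) w rfl K hKw
    have huv : u ≠ v := by
      intro h
      rw [h, SimpleGraph.dist_self] at hu
      omega
    have huN : u ∈ N := hK2 ⟨huv, le_of_eq hu⟩
    -- N equals the image (cardinality forces it), hence u ∈ V'
    have hcardim : (Subtype.val '' ({u : ↥V' | u ≠ v'})).ncard = V'.ncard - 1 := by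
      rw [Set.ncard_image_of_injective _ Subtype.val_injective]
      have h1 : ({u : ↥V' | u ≠ v'} : Set ↥V') = Set.univ \ {v'} := by
        ext x; simp
      rw [h1, Set.ncard_diff_singleton_of_mem (Set.mem_univ v'),
        Set.ncard_univ, Nat.card_coe_set_eq]
    have hle : V'.ncard - 1 ≤ s := by
      have := Set.ncard_le_ncard hsub (Set.toFinite N)
      rw [hcardim, hN.2.1] at this
      exact this
    have hNeq : Subtype.val '' ({u : ↥V' | u ≠ v'}) = N := by
      exact Set.eq_of_subset_of_ncard_le hsub (by rw [hcardim, hN.2.1]; omega)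
    rw [← hNeq] at huN
    obtain ⟨u', hu', huu'⟩ := huN
    have : G'.dist v' u' ≤ e' :=
      le_ciSup (Set.Finite.bddAbove (Set.finite_range _)) u'
    have h2 := hdd u'
    rw [huu', hu] at h2
    omega
  -- conclude
  have hKmem' : K ∈ S' := ⟨part2, part1⟩
  exact le_csSup ⟨⨆ u, G'.dist v' u, fun k hk => hk.1⟩ hKmem'
end

section
/- Let G be a connected unweighted undirected graph on n vertices. For any vertex v and integers s₁, s₂ ≥ 1 with s₁(s₂+1) < n−1, it holds that ecc(v, s₁(s₂+1)) ≥ ecc(v, s₁) + rad(s₂), where ecc(v,s) is the largest k with T(v,k) ⊆ N(v,s) and rad(s) = min_u ecc(u,s). -/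
open SimpleGraph

lemma exists_mid {V : Type*} {G : SimpleGraph V} (hG : G.Connected) {v u : V}
    (p : G.Walk v u) (k : ℕ) (hk : k ≤ p.length) :
    ∃ w, G.dist v w ≤ k ∧ G.dist w u ≤ p.length - k := by
  induction p generalizing k with
  | @nil a =>
    exact ⟨a, by simp [SimpleGraph.dist_self], by simp [SimpleGraph.dist_self]⟩
  | @cons a b c h q ih =>
    match k with
    | 0 =>
      exact ⟨a, by simp [SimpleGraph.dist_self], by simpa using SimpleGraph.dist_le (q.cons h)⟩
    | k' + 1 =>
      obtain ⟨w, h1, h2⟩ := ih k' (by simpa using hk)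
      refine ⟨w, ?_, ?_⟩
      · calc G.dist a w ≤ G.dist a b + G.dist b w := hG.dist_triangle
          _ ≤ 1 + k' := by
              have : G.dist a b ≤ 1 := by simpa using SimpleGraph.dist_le h.toWalk
              omega
          _ = k' + 1 := by omega
      · simpa [Nat.succ_sub_succ] using h2

lemma eccTrunc_spec {V : Type*} [Fintype V] {G : SimpleGraph V} (hG : G.Connected)
    (x : V) (N : Set V) :
    eccTrunc G x N ≤ (⨆ u, G.dist x u) ∧ ballT G x (eccTrunc G x N) ⊆ N := by
  have hball0 : ballT G x 0 = ∅ := by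
    ext u
    simp only [ballT, Set.mem_setOf_eq, Nat.le_zero, Set.mem_empty_iff_false, iff_false,
      not_and]
    intro hu hd
    exact hu ((hG.dist_eq_zero_iff).mp hd).symm
  have hne : {k : ℕ | k ≤ (⨆ u, G.dist x u) ∧ ballT G x k ⊆ N}.Nonempty :=
    ⟨0, Nat.zero_le _, by simp [hball0]⟩
  have hbdd : BddAbove {k : ℕ | k ≤ (⨆ u, G.dist x u) ∧ ballT G x k ⊆ N} :=
    ⟨_, fun k hk => hk.1⟩
  exact Nat.sSup_mem hne hbdd

lemma ballT_mono {V : Type*} (G : SimpleGraph V) (x : V) {k k' : ℕ} (h : k ≤ k') :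
    ballT G x k ⊆ ballT G x k' := fun u hu => ⟨hu.1, hu.2.trans h⟩


/-- `ecc(v, s₁(s₂+1)) ≥ ecc(v, s₁) + rad(s₂)` whenever `s₁, s₂ ≥ 1` and
`s₁(s₂+1) < n - 1`. -/
theorem stmt6 {V : Type*} [Fintype V] (G : SimpleGraph V) (hG : G.Connected) (v : V)
    (s₁ s₂ : ℕ) (h1 : 1 ≤ s₁) (h2 : 1 ≤ s₂)
    (h3 : s₁ * (s₂ + 1) < Fintype.card V - 1)
    (N₁ : Set V) (hN₁ : closestSet G v s₁ N₁)
    (N₁₂ : Set V) (hN₁₂ : closestSet G v (s₁ * (s₂ + 1)) N₁₂)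
    (Nf : V → Set V) (hNf : ∀ u, closestSet G u s₂ (Nf u)) :
    eccTrunc G v N₁ + ⨅ u, eccTrunc G u (Nf u) ≤ eccTrunc G v N₁₂ := by
  classical
  set k₁ := eccTrunc G v N₁ with hk₁
  set r := ⨅ u, eccTrunc G u (Nf u) with hrdef
  -- basic facts
  have hrle : ∀ w : V, r ≤ eccTrunc G w (Nf w) := fun w => ciInf_le (OrderBot.bddBelow _) w
  have hballr : ∀ w : V, ballT G w r ⊆ Nf w := fun w =>
    (ballT_mono G w (hrle w)).trans (eccTrunc_spec hG w (Nf w)).2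
  have hball1 : ballT G v k₁ ⊆ N₁ := (eccTrunc_spec hG v N₁).2
  -- cardinality bound on the ball of radius k₁ + r
  have hcard : (ballT G v (k₁ + r)).ncard ≤ s₁ * (s₂ + 1) := by
    by_cases hk0 : k₁ = 0
    · have hsub : ballT G v (k₁ + r) ⊆ Nf v := by
        rw [hk0, zero_add]; exact hballr v
      calc (ballT G v (k₁ + r)).ncard ≤ (Nf v).ncard :=
            Set.ncard_le_ncard hsub (Set.toFinite _)
        _ = s₂ := (hNf v).2.1
        _ ≤ s₁ * (s₂ + 1) := by nlinarith
    · -- k₁ ≥ 1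
      have hk1pos : 1 ≤ k₁ := Nat.one_le_iff_ne_zero.mpr hk0
      set F : Finset V := (Set.toFinite N₁).toFinset with hF
      set B : Finset V := F.biUnion (fun w => insert w (Set.toFinite (Nf w)).toFinset) with hB
      have hsub : ballT G v (k₁ + r) ⊆ ↑B := by
        rintro u ⟨huv, hud⟩
        by_cases hle : G.dist v u ≤ k₁
        · have huN₁ : u ∈ N₁ := hball1 ⟨huv, hle⟩
          simp only [hB, Finset.coe_biUnion, Set.mem_iUnion, Finset.mem_coe]
          exact ⟨u, by simpa [hF] using huN₁, by simp⟩
        · push_neg at hle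
          obtain ⟨p, hp⟩ := (hG.preconnected v u).exists_walk_length_eq_dist
          obtain ⟨w, hw1, hw2⟩ := exists_mid hG p k₁ (by omega)
          rw [hp] at hw2
          have hw2' : G.dist w u ≤ r := by omega
          have hwv : w ≠ v := by
            intro h; subst h
            have : G.dist w u ≤ G.dist w u - k₁ := hw2
            omega
          have hwN₁ : w ∈ N₁ := hball1 ⟨hwv, hw1⟩
          have huw : u ≠ w := by
            intro h; subst h; omega
          have huNf : u ∈ Nf w := hballr w ⟨huw, hw2'⟩
          simp only [hB, Finset.coe_biUnion, Set.mem_iUnion, Finset.mem_coe]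
          refine ⟨w, by simpa [hF] using hwN₁, ?_⟩
          simp only [Finset.mem_insert, Set.Finite.mem_toFinset]
          exact Or.inr huNf
      calc (ballT G v (k₁ + r)).ncard ≤ (↑B : Set V).ncard :=
            Set.ncard_le_ncard hsub (Set.toFinite _)
        _ = B.card := Set.ncard_coe_finset B
        _ ≤ F.card * (s₂ + 1) := by
            apply Finset.card_biUnion_le_card_mul
            intro w _
            calc (insert w (Set.toFinite (Nf w)).toFinset).card
                ≤ (Set.toFinite (Nf w)).toFinset.card + 1 := Finset.card_insert_le _ _
              _ = s₂ + 1 := by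
                  rw [← Set.ncard_eq_toFinset_card (Nf w) (Set.toFinite _), (hNf w).2.1]
        _ = s₁ * (s₂ + 1) := by
            congr 1
            rw [hF, ← Set.ncard_eq_toFinset_card N₁ (Set.toFinite _), hN₁.2.1]
  -- the ball is contained in N₁₂
  have hsub12 : ballT G v (k₁ + r) ⊆ N₁₂ := by
    by_contra hc
    obtain ⟨u, hu, huN⟩ := Set.not_subset.mp hc
    have hsub' : insert u N₁₂ ⊆ ballT G v (k₁ + r) := by
      intro w hw
      rcases Set.mem_insert_iff.mp hw with rfl | hw
      · exact hu
      · exact ⟨fun h => hN₁₂.1 (h ▸ hw), (hN₁₂.2.2 w hw u huN hu.1).trans hu.2⟩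
    have := Set.ncard_le_ncard hsub' (Set.toFinite _)
    rw [Set.ncard_insert_of_notMem huN (Set.toFinite _), hN₁₂.2.1] at this
    omega
  -- k₁ + r ≤ ecc v
  have hecc : k₁ + r ≤ ⨆ u, G.dist v u := by
    have hlt : (insert v (ballT G v (k₁ + r))).ncard < Fintype.card V := by
      have h4 := Set.ncard_insert_le v (ballT G v (k₁ + r))
      have h5 : 0 < Fintype.card V := Fintype.card_pos_iff.mpr ⟨v⟩
      omega
    obtain ⟨u, hu⟩ : ∃ u, u ∉ insert v (ballT G v (k₁ + r)) := by
      by_contra hc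
      push_neg at hc
      have : (Set.univ : Set V) ⊆ insert v (ballT G v (k₁ + r)) := fun x _ => hc x
      have := Set.ncard_le_ncard this (Set.toFinite _)
      rw [Set.ncard_univ, Nat.card_eq_fintype_card] at this
      omega
    simp only [Set.mem_insert_iff, ballT, Set.mem_setOf_eq, not_or, not_and, not_le] at hu
    have hd : k₁ + r < G.dist v u := hu.2 hu.1
    exact le_trans hd.le (le_ciSup (Set.Finite.bddAbove (Set.finite_range _)) u)
  -- conclude
  exact le_csSup ⟨_, fun k hk => hk.1⟩ ⟨hecc, hsub12⟩
end

section
/- Let G be a connected unweighted undirected graph, A ⊆ V nonempty, p(v) a closest vertex of A to v, u, v ∈ V, and let a (resp. b) be a vertex on a shortest u–v path with a ∈ B(u) (resp. b ∈ B(v)). If 2·min{d(u,a), d(v,b)} ≤ d(u,v) − r − 1 for some integer r ≥ 0, then the estimate d̂(u,v) = min{ d(u,p(u)) + d(p(u),v), d(u,p(v)) + d(p(v),v) } satisfies d(u,v) ≤ d̂(u,v) ≤ 2·d(u,v) + 1 − r, using that d(u,p(u)) = d(u,a) + 1 when a is the furthest B(u)-vertex on the path and similarly d(v,p(v)) = d(v,b)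 + 1. -/
open SimpleGraph

/-- stretch analysis of the ADO estimate
`d̂(u,v) = min{ d(u,p(u)) + d(p(u),v), d(u,p(v)) + d(p(v),v) }`. -/
theorem stmt12 {V : Type*} (G : SimpleGraph V) (hG : G.Connected)
    (A : Set V) (hA : A.Nonempty)
    (p : V → V) (hpA : ∀ x, p x ∈ A)
    (hpmin : ∀ x, ∀ a ∈ A, G.dist x (p x) ≤ G.dist x a)
    (u v a b : V) (r : ℕ)
    -- `a` and `b` lie on a fixed shortest `u`–`v` path:
    (ha : G.dist u a + G.dist a v = G.dist u v)
    (hb : G.dist u b + G.dist b v = G.dist u v)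
    -- `a ∈ B(u)`, `b ∈ B(v)`:
    (haB : G.dist u a < G.dist u (p u))
    (hbB : G.dist v b < G.dist v (p v))
    -- `a` (resp. `b`) is the furthest bunch vertex on the path:
    (hpu : G.dist u (p u) = G.dist u a + 1)
    (hpv : G.dist v (p v) = G.dist v b + 1)
    (hmin : 2 * (min (G.dist u a) (G.dist v b) : ℤ) ≤ (G.dist u v : ℤ) - r - 1) :
    G.dist u v ≤
      min (G.dist u (p u) + G.dist (p u) v) (G.dist u (p v) + G.dist (p v) v) ∧
    ((min (G.dist u (p u) + G.dist (p u) v) (G.dist u (p v) + G.dist (p v) v) : ℕ) : ℤ)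
      ≤ 2 * (G.dist u v : ℤ) + 1 - r := by
  have t1 : G.dist u v ≤ G.dist u (p u) + G.dist (p u) v := hG.dist_triangle
  have t2 : G.dist u v ≤ G.dist u (p v) + G.dist (p v) v := hG.dist_triangle
  have s1 : G.dist (p u) v ≤ G.dist (p u) u + G.dist u v := hG.dist_triangle
  have s2 : G.dist u (p v) ≤ G.dist u v + G.dist v (p v) := hG.dist_triangle
  have c1 : G.dist (p u) u = G.dist u (p u) := SimpleGraph.dist_comm
  have c2 : G.dist (p v) v = G.dist v (p v) := SimpleGraph.dist_comm
  refine ⟨le_min t1 t2, ?_⟩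
  rcases le_total (G.dist u a) (G.dist v b) with h | h
  · have hm : min ((G.dist u a : ℤ)) ((G.dist v b : ℤ)) = (G.dist u a : ℤ) := min_eq_left (by exact_mod_cast h)
    rw [hm] at hmin
    calc ((min (G.dist u (p u) + G.dist (p u) v) (G.dist u (p v) + G.dist (p v) v) : ℕ) : ℤ)
        ≤ ((G.dist u (p u) + G.dist (p u) v : ℕ) : ℤ) := by
          exact_mod_cast min_le_left _ _
      _ ≤ 2 * (G.dist u v : ℤ) + 1 - r := by push_cast; omega
  · have hm : min ((G.dist u a : ℤ)) ((G.dist v b : ℤ)) = (G.dist v b : ℤ) := min_eq_right (by exact_mod_cast h)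
    rw [hm] at hmin
    calc ((min (G.dist u (p u) + G.dist (p u) v) (G.dist u (p v) + G.dist (p v) v) : ℕ) : ℤ)
        ≤ ((G.dist u (p v) + G.dist (p v) v : ℕ) : ℤ) := by
          exact_mod_cast min_le_right _ _
      _ ≤ 2 * (G.dist u v : ℤ) + 1 - r := by push_cast; omega
end
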